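/- Let S be a cancellative monoid of I-type with I-structure v : ℕⁿ → S, let φ : ℕⁿ → Sym(n) be defined (as in the theory of I-structures) so that v(a+b) = v(φ(b)(a))·v(b), and suppose t₁,…,tₙ > 0 satisfy φ(tᵢ·eᵢ) = id for all i. Let P₀ be the submonoid of ℕⁿ generated by the elements tᵢ·eᵢ. Then v restricted to P₀ is a monoid homomorphism onto a free abelian submonoid of S of rank n, freely generated by the elements v(tᵢ·eᵢ). -/

import Mathlib

/-- The action of a permutation on the free commutative monoid `ℕⁿ`
(permuting the generators). -/
def permAct {n : ℕ} (σ : Equiv.Perm (Fin n)) (a : Fin n → ℕ) : Fin n → ℕ :=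
  fun i => a (σ⁻¹ i)

/-!
By the cocycle identity `φ (b + c) = φ (φ c • b) * φ c`, the kernel of `φ` is a submonoid of `ℕⁿ`
containing every `tᵢ eᵢ`, hence all of `P₀ = {t • c}`. On pairs `(a, b)` with `φ b = 1` the
relation `v (a + b) = v (φ b • a) * v b` says that `v` is multiplicative, which gives the
homomorphism property on `P₀` and the commutation of the `v (tᵢ eᵢ)`; injectivity is inherited
from `v`.
-/

@[simp]
lemma permAct_one {n : ℕ} (a : Fin n → ℕ) : permAct 1 a = a := rfl

@[simp]
lemma permAct_zero {n : ℕ} (σ : Equiv.Perm (Fin n)) : permAct σ 0 = 0 := rfl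

section Cocycle

variable {n : ℕ} (φ : (Fin n → ℕ) → Equiv.Perm (Fin n))

lemma cocycle_map_zero (hcoc : ∀ b c : Fin n → ℕ, φ (b + c) = φ (permAct (φ c) b) * φ c) :
    φ 0 = 1 := by
  simpa using (hcoc 0 0).symm

def cocycleKer (hcoc : ∀ b c : Fin n → ℕ, φ (b + c) = φ (permAct (φ c) b) * φ c) :
    AddSubmonoid (Fin n → ℕ) where
  carrier := {b | φ b = 1}
  zero_mem' := cocycle_map_zero φ hcoc
  add_mem' {b c} (hb : φ b = 1) (hc : φ c = 1) := show φ (b + c) = 1 by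
    rw [hcoc, hc, permAct_one, hb, one_mul]

end Cocycle

lemma scale_eq_sum_nsmul_single {n : ℕ} (t c : Fin n → ℕ) :
    (fun i => t i * c i) = ∑ i, c i • Pi.single i (t i) := by
  ext j
  simp [Finset.sum_apply, Pi.single_apply, mul_comm]

lemma scale_mem_of_single_mem {n : ℕ} (K : AddSubmonoid (Fin n → ℕ)) (t : Fin n → ℕ)
    (hK : ∀ i, Pi.single i (t i) ∈ K) (c : Fin n → ℕ) : (fun i => t i * c i) ∈ K := by
  rw [scale_eq_sum_nsmul_single]
  exact K.sum_mem fun i _ => K.nsmul_mem (hK i) (c i)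

lemma map_add_of_cocycle_eq_one {n : ℕ} {S : Type*} [Mul S] (v : (Fin n → ℕ) → S)
    (φ : (Fin n → ℕ) → Equiv.Perm (Fin n))
    (hφ : ∀ a b : Fin n → ℕ, v (a + b) = v (permAct (φ b) a) * v b)
    (a : Fin n → ℕ) {b : Fin n → ℕ} (hb : φ b = 1) : v (a + b) = v a * v b := by
  rw [hφ, hb, permAct_one]

theorem free_abelian_submonoid_of_I_type_general {n : ℕ} {S : Type*} [Monoid S]
    (v : (Fin n → ℕ) → S) (hbij : Function.Bijective v)
    (φ : (Fin n → ℕ) → Equiv.Perm (Fin n))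
    (hφ : ∀ a b : Fin n → ℕ, v (a + b) = v (permAct (φ b) a) * v b)
    (hcoc : ∀ b c : Fin n → ℕ, φ (b + c) = φ (permAct (φ c) b) * φ c)
    (t : Fin n → ℕ) (ht : ∀ i, 0 < t i)
    (hker : ∀ i, φ (Pi.single i (t i)) = 1) :
    (∀ c d : Fin n → ℕ,
        v (fun i => t i * (c i + d i)) =
          v (fun i => t i * c i) * v (fun i => t i * d i)) ∧
    Function.Injective (fun c : Fin n → ℕ => v (fun i => t i * c i)) ∧
    ∀ i j : Fin n,
      v (Pi.single i (t i)) * v (Pi.single j (t j)) =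
        v (Pi.single j (t j)) * v (Pi.single i (t i)) := by
  have hv := map_add_of_cocycle_eq_one v φ hφ
  refine ⟨fun c d => ?_, fun c d hcd => ?_, fun i j => ?_⟩
  · have hP := scale_mem_of_single_mem (cocycleKer φ hcoc) t hker d
    simpa only [Pi.add_def, mul_add] using hv (fun i => t i * c i) hP
  · funext i
    exact Nat.eq_of_mul_eq_mul_left (ht i) (congrFun (hbij.injective hcd) i)
  · rw [← hv _ (hker j), ← hv _ (hker i), add_comm]

theorem free_abelian_submonoid_of_I_type {n : ℕ} {S : Type*} [Monoid S]
    (hcancel : ∀ a b c : S, (a * b = a * c → b = c) ∧ (b * a = c * a → b = c))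
    (x : Fin n → S) (hgen : Submonoid.closure (Set.range x) = ⊤)
    (v : (Fin n → ℕ) → S) (hbij : Function.Bijective v) (hone : v 0 = 1)
    (φ : (Fin n → ℕ) → Equiv.Perm (Fin n))
    (hφ : ∀ a b : Fin n → ℕ, v (a + b) = v (permAct (φ b) a) * v b)
    (hcoc : ∀ b c : Fin n → ℕ, φ (b + c) = φ (permAct (φ c) b) * φ c)
    (t : Fin n → ℕ) (ht : ∀ i, 0 < t i)
    (hker : ∀ i, φ (Pi.single i (t i)) = 1) :
    (∀ c d : Fin n → ℕ,
        v (fun i => t i * (c i + d i)) =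
          v (fun i => t i * c i) * v (fun i => t i * d i)) ∧
    Function.Injective (fun c : Fin n → ℕ => v (fun i => t i * c i)) ∧
    ∀ i j : Fin n,
      v (Pi.single i (t i)) * v (Pi.single j (t j)) =
        v (Pi.single j (t j)) * v (Pi.single i (t i)) :=
  free_abelian_submonoid_of_I_type_general v hbij φ hφ hcoc t ht hker
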